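/- The Lorenz five-component system ẋ1 = −x2x3 + εx2x5, ẋ2 = x1x3 − εx1x5, ẋ3 = −x1x2, ẋ4 = −x5, ẋ5 = x4 + εx1x2 is Hamiltonian with respect to the bracket {·,·}_1 with Hamiltonian H(x) = ½(x1² + 2x2² + x3² + x4² + x5²); that is, for each coordinate function xi, the vector field component equals {xi, H}_1. -/

import Mathlib

noncomputable def pd (i : Fin 5) (f : (Fin 5 → ℝ) → ℝ) (x : Fin 5 → ℝ) : ℝ :=
  fderiv ℝ f x (Pi.single i 1)

noncomputable def bracket1 (ε : ℝ) (f g : (Fin 5 → ℝ) → ℝ) (x : Fin 5 → ℝ) : ℝ :=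
  x 0 * ((pd 1 f x * pd 2 g x - pd 2 f x * pd 1 g x)
        + ε * (pd 4 f x * pd 1 g x - pd 1 f x * pd 4 g x))
  + x 1 * ((pd 2 f x * pd 0 g x - pd 0 f x * pd 2 g x)
        + ε * (pd 0 f x * pd 4 g x - pd 4 f x * pd 0 g x))
  + pd 4 f x * pd 3 g x - pd 3 f x * pd 4 g x

noncomputable def bracket2 (f g : (Fin 5 → ℝ) → ℝ) (x : Fin 5 → ℝ) : ℝ :=
  x 0 * (pd 1 f x * pd 2 g x - pd 2 f x * pd 1 g x)
  + x 1 * (pd 2 f x * pd 0 g x - pd 0 f x * pd 2 g x)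
  + pd 4 f x * pd 3 g x - pd 3 f x * pd 4 g x

/-!
The Hamiltonian is the diagonal quadratic form `½ ∑ cⱼ xⱼ²` with weights `c = (1, 2, 1, 1, 1)`,
so `∂ᵢH = cᵢ xᵢ`, while `∂ᵢ xⱼ = δᵢⱼ`. Substituting these into `{xᵢ, H}_1` leaves five
polynomial identities.
-/

lemma HasFDerivAt.pd_eq {f : (Fin 5 → ℝ) → ℝ} {f' : (Fin 5 → ℝ) →L[ℝ] ℝ} {x : Fin 5 → ℝ}
    (h : HasFDerivAt f f' x) (i : Fin 5) : pd i f x = f' (Pi.single i 1) := by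
  rw [pd, h.fderiv]

lemma pd_coord (i j : Fin 5) (x : Fin 5 → ℝ) :
    pd i (fun y => y j) x = (Pi.single i 1 : Fin 5 → ℝ) j :=
  (hasFDerivAt_apply (𝕜 := ℝ) j x).pd_eq i

lemma pd_half_weighted_sum_sq (c : Fin 5 → ℝ) (i : Fin 5) (x : Fin 5 → ℝ) :
    pd i (fun y => (1/2) * ∑ j, c j * y j ^ 2) x = c i * x i := by
  have h := (HasFDerivAt.fun_sum (u := Finset.univ) fun j _ =>
    ((hasFDerivAt_apply (𝕜 := ℝ) j x).pow 2).const_mul (c j)).const_mul (1/2 : ℝ)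
  rw [h.pd_eq]
  simp [Pi.single_apply, mul_left_comm _ (2 : ℝ)]

theorem lorenz_hamiltonian_bracket1 (ε : ℝ) :
    ∀ x : Fin 5 → ℝ,
      bracket1 ε (fun y => y 0)
        (fun y => (1/2) * ((y 0)^2 + 2*(y 1)^2 + (y 2)^2 + (y 3)^2 + (y 4)^2)) x
        = -(x 1)*(x 2) + ε*(x 1)*(x 4) ∧
      bracket1 ε (fun y => y 1)
        (fun y => (1/2) * ((y 0)^2 + 2*(y 1)^2 + (y 2)^2 + (y 3)^2 + (y 4)^2)) x
        = (x 0)*(x 2) - ε*(x 0)*(x 4) ∧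
      bracket1 ε (fun y => y 2)
        (fun y => (1/2) * ((y 0)^2 + 2*(y 1)^2 + (y 2)^2 + (y 3)^2 + (y 4)^2)) x
        = -((x 0)*(x 1)) ∧
      bracket1 ε (fun y => y 3)
        (fun y => (1/2) * ((y 0)^2 + 2*(y 1)^2 + (y 2)^2 + (y 3)^2 + (y 4)^2)) x
        = -(x 4) ∧
      bracket1 ε (fun y => y 4)
        (fun y => (1/2) * ((y 0)^2 + 2*(y 1)^2 + (y 2)^2 + (y 3)^2 + (y 4)^2)) x
        = x 3 + ε*(x 0)*(x 1) := by
  intro x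
  have hH_diag : (fun y : Fin 5 → ℝ => (1/2) * ((y 0)^2 + 2*(y 1)^2 + (y 2)^2 + (y 3)^2 + (y 4)^2))
      = fun y => (1/2) * ∑ j, ![1, 2, 1, 1, 1] j * y j ^ 2 := by
    funext y
    simp [Fin.sum_univ_five]
  simp only [hH_diag, bracket1, pd_coord, pd_half_weighted_sum_sq]
  refine ⟨?_, ?_, ?_, ?_, ?_⟩ <;>
    simp only [Pi.single_apply, Fin.reduceEq, ↓reduceIte, Matrix.cons_val] <;> ring
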